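/- arXiv:math/0401075 — 3 statements merged into one kernel-verified Lean document; each statement's English description precedes it below -/
import Mathlib

section
/- The sets X₁₄ and A₆ do not intersect: X₁₄ ∩ A₆ = ∅. -/
/-!
A point of `X₁₄ ∩ A₆` forces `ζ^{4t} r = ζˢ r` and `ζᵗ x = ζ^{2s} x` with `t ∈ [0,1]`, `s ∈ [5,6]`,
and `r` and `x` do not both vanish. Since `ζᵃ = ζᵇ` only when `a - b ∈ 7ℤ`, this is impossible:
`4t - s ∈ [-6,-1]` and `t - 2s ∈ [-12,-9]` both lie strictly between consecutive multiples of `7`.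
-/

open Complex

/-- `zeta t = exp(2πit/7)`. -/
noncomputable def zeta (t : ℝ) : ℂ := Complex.exp ((2 * Real.pi * t / 7 : ℝ) * Complex.I)

/-- The 3-sphere as the unit sphere in `ℂ × ℂ`. -/
def Sph3 : Set (ℂ × ℂ) := {p | ‖p.1‖ ^ 2 + ‖p.2‖ ^ 2 = 1}

/-- The "diagonal" 3-sphere `Δ_k = {((x₁,x₂),(ζᵏx₁,ζ^{2k}x₂))} ⊆ S³ × S³`. -/
def Delta (k : ℕ) : Set ((ℂ × ℂ) × (ℂ × ℂ)) :=
  {q | ∃ p ∈ Sph3, q = (p, (zeta k * p.1, zeta (2 * k) * p.2))}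

/-- `A_k = {((x₁,x₂),(ζˢx₁,ζ^{2s}x₂)) : (x₁,x₂) ∈ S³, s ∈ [k−1,k]} ⊆ S³ × S³`. -/
def A (k : ℕ) : Set ((ℂ × ℂ) × (ℂ × ℂ)) :=
  {q | ∃ p ∈ Sph3, ∃ s : ℝ, (k : ℝ) - 1 ≤ s ∧ s ≤ k ∧
    q = (p, (zeta s * p.1, zeta (2 * s) * p.2))}

/-- `X₁₄ = {((r,x),(ζ^{4t}r, ζᵗx)) : (r,x) ∈ D₂, t ∈ [0,1]}`, where
`D₂ = {(r,x) ∈ ℝ × ℂ : 0 ≤ r ≤ 1, r² + |x|² = 1} ⊆ S³`. -/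
def X14 : Set ((ℂ × ℂ) × (ℂ × ℂ)) :=
  {q | ∃ (r : ℝ) (x : ℂ), 0 ≤ r ∧ r ≤ 1 ∧ r ^ 2 + ‖x‖ ^ 2 = 1 ∧
    ∃ t ∈ Set.Icc (0:ℝ) 1, q = (((r : ℂ), x), (zeta (4 * t) * r, zeta t * x))}

theorem zeta_eq_zeta_iff {a b : ℝ} : zeta a = zeta b ↔ ∃ n : ℤ, a = b + 7 * n := by
  simp only [zeta, Complex.exp_eq_exp_iff_exists_int]
  refine exists_congr fun n => ⟨fun h => ?_, fun h => ?_⟩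
  · have h' : 2 * Real.pi * a / 7 = 2 * Real.pi * b / 7 + n * (2 * Real.pi) := by
      simpa using congrArg im h
    field_simp [Real.pi_ne_zero] at h'
    linarith
  · subst h; push_cast; ring

theorem zeta_ne_zeta_of_sub_mem_Ioo {a b : ℝ} (m : ℤ) (hlo : 7 * m < a - b)
    (hhi : a - b < 7 * (m + 1)) : zeta a ≠ zeta b := by
  rintro h
  obtain ⟨n, rfl⟩ := zeta_eq_zeta_iff.mp h
  have hlo' : m < n := by exact_mod_cast (by linarith : (m : ℝ) < n)
  have hhi' : n < m + 1 := by exact_mod_cast (by linarith : (n : ℝ) < m + 1)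
  omega

/-- The sets `X₁₄` and `A₆` do not intersect. -/
theorem stmt_14 : X14 ∩ A 6 = ∅ := by
  refine Set.eq_empty_iff_forall_notMem.mpr ?_
  rintro _ ⟨⟨r, x, -, -, hrx, t, ⟨ht0, ht1⟩, rfl⟩, ⟨p, -, s, hs6, hs7, hq⟩⟩
  simp only [Prod.ext_iff] at hq
  obtain ⟨⟨hp1, hp2⟩, hr, hx⟩ := hq
  rw [← hp1] at hr; rw [← hp2] at hx
  push_cast at hs6 hs7
  by_cases r0 : r = 0
  · have x0 : x ≠ 0 := by rintro rfl; simp [r0] at hrx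
    exact zeta_ne_zeta_of_sub_mem_Ioo (-2) (by push_cast; linarith) (by push_cast; linarith)
      (mul_right_cancel₀ x0 hx)
  · exact zeta_ne_zeta_of_sub_mem_Ioo (-1) (by push_cast; linarith) (by push_cast; linarith)
      (mul_right_cancel₀ (ofReal_ne_zero.mpr r0) hr)
end

section
/- X₁₄ ∩ A₂ = {((1,0),(ζ^{1+s},0)) : s ∈ [0,1]}; in particular this intersection is an arc joining Δ₁ to Δ₂ and equals A₂ ∩ ({(1,0)} × S³). -/
open Complex

lemma norm_zeta (t : ℝ) : ‖zeta t‖ = 1 := by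
  simp [zeta, Complex.norm_exp]

lemma eq_of_zeta_eq {a b : ℝ} (h : zeta a = zeta b) (hab : |a - b| < 7) : a = b := by
  obtain ⟨n, hn⟩ := Complex.exp_eq_exp_iff_exists_int.mp h
  have hsub : a - b = 7 * n := by
    have him : 2 * Real.pi * a / 7 = 2 * Real.pi * b / 7 + n * (2 * Real.pi) := by
      simpa using congrArg Complex.im hn
    field_simp at him
    nlinarith [Real.pi_pos]
  have hn0 : n = 0 := by
    rw [hsub, abs_mul, abs_of_pos (by norm_num : (0:ℝ) < 7)] at hab
    have : |(n : ℝ)| < 1 := by linarith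
    exact Int.abs_lt_one_iff.mp (by exact_mod_cast this)
  simp only [hn0, Int.cast_zero, mul_zero] at hsub
  linarith

lemma snd_mem_Sph3_of_mem_A {k : ℕ} {q : (ℂ × ℂ) × (ℂ × ℂ)} (hq : q ∈ A k) : q.2 ∈ Sph3 := by
  obtain ⟨p, hp, s, -, -, rfl⟩ := hq
  simpa [Sph3, norm_zeta] using hp

lemma basepoint_mem_Delta (k : ℕ) : (((1 : ℂ), (0 : ℂ)), (zeta k, (0 : ℂ))) ∈ Delta k :=
  ⟨((1 : ℂ), (0 : ℂ)), by simp [Sph3], by simp⟩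

def arc : Set ((ℂ × ℂ) × (ℂ × ℂ)) :=
  {q | ∃ s ∈ Set.Icc (0:ℝ) 1, q = (((1 : ℂ), (0 : ℂ)), (zeta (1 + s), (0 : ℂ)))}

lemma A_two_inter_fst_eq : A 2 ∩ {q | q.1 = ((1 : ℂ), (0 : ℂ))} = arc := by
  ext q
  constructor
  · rintro ⟨⟨p, -, s, hs1, hs2, rfl⟩, rfl : p = _⟩
    norm_num at hs1 hs2
    exact ⟨s - 1, ⟨by linarith, by linarith⟩, by simp⟩
  · rintro ⟨s, ⟨hs0, hs1⟩, rfl⟩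
    refine ⟨⟨((1 : ℂ), (0 : ℂ)), by simp [Sph3], 1 + s, ?_, ?_, by simp⟩, rfl⟩ <;>
      norm_num <;> linarith

lemma arc_subset_X14 : arc ⊆ X14 := by
  rintro q ⟨s, ⟨hs0, hs1⟩, rfl⟩
  refine ⟨1, 0, zero_le_one, le_rfl, by simp, (1 + s) / 4, ⟨by linarith, by linarith⟩, ?_⟩
  simp [mul_div_cancel₀]

/-- On the `x`-coordinate, `X₁₄` rotates by `ζᵗ` with `t ∈ [0,1]` and `A₂` by `ζ^{2s}` with
`2s ∈ [2,4]`; these never agree, so `x = 0` and hence `r = 1`. -/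
lemma fst_eq_of_mem_X14_of_mem_A_two {q : (ℂ × ℂ) × (ℂ × ℂ)} (hX : q ∈ X14) (hA : q ∈ A 2) :
    q.1 = ((1 : ℂ), (0 : ℂ)) := by
  obtain ⟨r, x, hr0, -, hrx, t, ⟨ht0, ht1⟩, rfl⟩ := hX
  obtain ⟨p, -, s, hs1, hs2, hq⟩ := hA
  simp only [Prod.mk.injEq] at hq
  obtain ⟨rfl, -, hx⟩ := hq
  norm_num at hs1 hs2
  have hx0 : x = 0 := by
    by_contra hx0
    have := eq_of_zeta_eq (mul_right_cancel₀ hx0 hx) (by rw [abs_lt]; constructor <;> linarith)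
    linarith
  subst hx0
  have hr : r = 1 := by nlinarith [show r ^ 2 = 1 by simpa using hrx]
  simp [hr]

/-- `X₁₄ ∩ A₂ = {((1,0),(ζ^{1+s},0)) : s ∈ [0,1]}`; in particular this intersection is
an arc joining `Δ₁` to `Δ₂` and equals `A₂ ∩ ({(1,0)} × S³)`. -/
theorem stmt_15 :
    X14 ∩ A 2 = {q | ∃ s ∈ Set.Icc (0:ℝ) 1,
        q = (((1 : ℂ), (0 : ℂ)), (zeta (1 + s), (0 : ℂ)))} ∧
    X14 ∩ A 2 = A 2 ∩ {q | q.1 = ((1 : ℂ), (0 : ℂ)) ∧ q.2 ∈ Sph3} ∧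
    (((1 : ℂ), (0 : ℂ)), (zeta 1, (0 : ℂ))) ∈ Delta 1 ∧
    (((1 : ℂ), (0 : ℂ)), (zeta 2, (0 : ℂ))) ∈ Delta 2 := by
  have harc : X14 ∩ A 2 = arc := by
    rw [← A_two_inter_fst_eq]
    exact Set.ext fun q => ⟨fun ⟨hX, hA⟩ => ⟨hA, fst_eq_of_mem_X14_of_mem_A_two hX hA⟩,
      fun hq => ⟨arc_subset_X14 (A_two_inter_fst_eq ▸ hq), hq.1⟩⟩
  refine ⟨harc, ?_, by exact_mod_cast basepoint_mem_Delta 1, by exact_mod_cast basepoint_mem_Delta 2⟩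
  rw [harc, ← A_two_inter_fst_eq]
  exact Set.ext fun q => ⟨fun ⟨hA, h⟩ => ⟨hA, h, snd_mem_Sph3_of_mem_A hA⟩,
    fun ⟨hA, h, _⟩ => ⟨hA, h⟩⟩
end

section
/- For any s ∈ [0,1] and t = (1+s)/4, the seven vectors ((i,0),(iζ^{1+s},0)), ((0,1),(0,ζ^{2+2s})), ((0,i),(0,iζ^{2+2s})), ((0,0),(iζ^{1+s},0)), ((0,1),(0,ζᵗ)), ((0,i),(0,iζᵗ)), ((0,0),(iζ^{4t},0)) in ℂ² × ℂ² span a real vector subspace of dimension 6. (These are the tangent vectors to A₂ and to X₁₄ at the point ((1,0),(ζ^{1+s},0)), so X₁₄ and A₂ intersect transversally.) -/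
open Complex

lemma zeta_ne_zero (t : ℝ) : zeta t ≠ 0 := Complex.exp_ne_zero _

lemma zeta_ne (s : ℝ) (hs : s ∈ Set.Icc (0:ℝ) 1) :
    zeta (2 + 2 * s) ≠ zeta ((1 + s) / 4) := by
  obtain ⟨hs0, hs1⟩ := hs
  intro h
  unfold zeta at h
  rw [Complex.exp_eq_exp_iff_exists_int] at h
  obtain ⟨n, hn⟩ := h
  have him := congrArg Complex.im hn
  simp [Complex.add_im, Complex.mul_im] at him
  have hpi := Real.pi_pos
  have hn' : ((1 + s) / 4 : ℝ) = n := by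
    field_simp at him
    nlinarith [him]
  have h0 : (0:ℝ) < (n:ℝ) := by rw [← hn']; linarith
  have h1 : ((n:ℝ)) < 1 := by rw [← hn']; linarith
  have : (0:ℤ) < n := by exact_mod_cast h0
  have : n < (1:ℤ) := by exact_mod_cast h1
  omega

/-- For any `s ∈ [0,1]` and `t = (1+s)/4`, the seven vectors
`((i,0),(iζ^{1+s},0))`, `((0,1),(0,ζ^{2+2s}))`, `((0,i),(0,iζ^{2+2s}))`,
`((0,0),(iζ^{1+s},0))`, `((0,1),(0,ζᵗ))`, `((0,i),(0,iζᵗ))`, `((0,0),(iζ^{4t},0))`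
in `ℂ² × ℂ²` span a real vector subspace of dimension 6.  (These are the tangent
vectors to `A₂` and to `X₁₄` at the point `((1,0),(ζ^{1+s},0))`, so `X₁₄` and `A₂`
intersect transversally.) -/
theorem stmt_16 (s : ℝ) (hs : s ∈ Set.Icc (0:ℝ) 1) (t : ℝ) (ht : t = (1 + s) / 4) :
    Module.finrank ℝ (Submodule.span ℝ
      ({((Complex.I, (0 : ℂ)), (Complex.I * zeta (1 + s), (0 : ℂ))),
        (((0 : ℂ), (1 : ℂ)), ((0 : ℂ), zeta (2 + 2 * s))),
        (((0 : ℂ), Complex.I), ((0 : ℂ), Complex.I * zeta (2 + 2 * s))),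
        (((0 : ℂ), (0 : ℂ)), (Complex.I * zeta (1 + s), (0 : ℂ))),
        (((0 : ℂ), (1 : ℂ)), ((0 : ℂ), zeta t)),
        (((0 : ℂ), Complex.I), ((0 : ℂ), Complex.I * zeta t)),
        (((0 : ℂ), (0 : ℂ)), (Complex.I * zeta (4 * t), (0 : ℂ)))} :
        Set ((ℂ × ℂ) × (ℂ × ℂ)))) = 6 := by
  subst ht
  have h4t : (4 : ℝ) * ((1 + s) / 4) = 1 + s := by ring
  rw [h4t]
  set a : (ℂ × ℂ) × (ℂ × ℂ) := ((Complex.I, (0 : ℂ)), (Complex.I * zeta (1 + s), (0 : ℂ)))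
  set b : (ℂ × ℂ) × (ℂ × ℂ) := (((0 : ℂ), (1 : ℂ)), ((0 : ℂ), zeta (2 + 2 * s)))
  set c : (ℂ × ℂ) × (ℂ × ℂ) := (((0 : ℂ), Complex.I), ((0 : ℂ), Complex.I * zeta (2 + 2 * s)))
  set d : (ℂ × ℂ) × (ℂ × ℂ) := (((0 : ℂ), (0 : ℂ)), (Complex.I * zeta (1 + s), (0 : ℂ)))
  set e : (ℂ × ℂ) × (ℂ × ℂ) := (((0 : ℂ), (1 : ℂ)), ((0 : ℂ), zeta ((1 + s) / 4)))
  set f : (ℂ × ℂ) × (ℂ × ℂ) := (((0 : ℂ), Complex.I), ((0 : ℂ), Complex.I * zeta ((1 + s) / 4)))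
  let v : Fin 6 → (ℂ × ℂ) × (ℂ × ℂ) := ![a, b, c, d, e, f]
  have hset : ({a, b, c, d, e, f, d} : Set ((ℂ × ℂ) × (ℂ × ℂ))) = Set.range v := by
    ext x
    constructor
    · rintro (rfl | rfl | rfl | rfl | rfl | rfl | rfl)
      exacts [⟨0, rfl⟩, ⟨1, rfl⟩, ⟨2, rfl⟩, ⟨3, rfl⟩, ⟨4, rfl⟩, ⟨5, rfl⟩, ⟨3, rfl⟩]
    · rintro ⟨i, rfl⟩
      fin_cases i <;> simp only [v, show (![a,b,c,d,e,f] : Fin 6 → _) 0 = a from rfl,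
        show (![a,b,c,d,e,f] : Fin 6 → _) 1 = b from rfl, show (![a,b,c,d,e,f] : Fin 6 → _) 2 = c from rfl,
        show (![a,b,c,d,e,f] : Fin 6 → _) 3 = d from rfl, show (![a,b,c,d,e,f] : Fin 6 → _) 4 = e from rfl,
        show (![a,b,c,d,e,f] : Fin 6 → _) 5 = f from rfl] <;> tauto
  rw [hset, finrank_span_eq_card ?_]
  · simp
  · rw [Fintype.linearIndependent_iff]
    intro g hg
    have hne := sub_ne_zero.mpr (zeta_ne s hs)
    have h1 : zeta (1 + s) ≠ 0 := zeta_ne_zero _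
    rw [Fin.sum_univ_six] at hg
    simp only [v, show (![a,b,c,d,e,f] : Fin 6 → _) 0 = a from rfl,
      show (![a,b,c,d,e,f] : Fin 6 → _) 1 = b from rfl, show (![a,b,c,d,e,f] : Fin 6 → _) 2 = c from rfl,
      show (![a,b,c,d,e,f] : Fin 6 → _) 3 = d from rfl, show (![a,b,c,d,e,f] : Fin 6 → _) 4 = e from rfl,
      show (![a,b,c,d,e,f] : Fin 6 → _) 5 = f from rfl, a, b, c, d, e, f,
      Prod.smul_mk, Prod.mk_add_mk, smul_eq_mul, Prod.mk_eq_zero] at hg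
    obtain ⟨⟨e1, e2⟩, e3, e4⟩ := hg
    simp only [smul_zero, add_zero, zero_add, real_smul] at e1 e2 e3 e4
    -- e1 : g0 * I = 0
    have hg0 : g 0 = 0 := by
      have := congrArg Complex.im e1
      simpa using this
    -- e2 : g1 * 1 + g2 * I + g4 * 1 + g5 * I = 0
    have hg14 : g 1 + g 4 = 0 := by
      have := congrArg Complex.re e2
      simp at this; linarith
    have hg25 : g 2 + g 5 = 0 := by
      have := congrArg Complex.im e2
      simp at this; linarith
    -- e3 : g0 * (I * ζ) + g3 * (I * ζ) = 0
    have hg3 : g 3 = 0 := by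
      rw [hg0] at e3
      simp only [Complex.ofReal_zero, zero_mul, zero_add] at e3
      have : (g 3 : ℂ) = 0 := by
        rcases mul_eq_zero.mp e3 with h | h'
        · exact h
        · rcases mul_eq_zero.mp h' with h | h
          · exact absurd h Complex.I_ne_zero
          · exact absurd h h1
      exact_mod_cast this
    -- e4 : g1 * ζ₂ + g2 * (I ζ₂) + g4 * ζt + g5 * (I ζt) = 0
    have hkey : ((g 1 : ℂ) + g 2 * Complex.I) * (zeta (2 + 2 * s) - zeta ((1 + s) / 4)) = 0 := by
      have h4 : (g 4 : ℝ) = -(g 1) := by linarith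
      have h5 : (g 5 : ℝ) = -(g 2) := by linarith
      rw [h4, h5] at e4
      push_cast at e4 ⊢
      linear_combination e4
    rcases mul_eq_zero.mp hkey with h | h
    · have hre : g 1 = 0 := by simpa using congrArg Complex.re h
      have him : g 2 = 0 := by simpa using congrArg Complex.im h
      intro i
      fin_cases i <;> simp [hg0, hg3, hre, him] <;> linarith
    · exact absurd h hne
end
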